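/- arXiv:2407.16043 — 4 statements merged into one kernel-verified Lean document; each statement's English description precedes it below -/
import Mathlib

section
/- Let s be a positive integer and let λ be a partition with non-empty remainder sequence rem_s(λ) = (ρ_1, …, ρ_m) and row position sequence pos_s(λ) = (γ_1, …, γ_m). Then c_s(Δ_s λ) = c_s(λ) if either (m = 1 and γ_1 = 1) or (m > 1 and γ_{m−1} = γ_m − 1 and ρ_{m−1} ≥ ρ_m), and c_s(Δ_s λ) = c_s(λ) + 1 otherwise. -/
/-!
Write `λ_i` for the parts, with `λ_i = 0` beyond the last one. Row `i` contributes
`⌊(λ_i - λ_{i+1}) / s⌋` cells to `c_s(λ)`. The operator `Δ_s` lowers the last part `λ_γ` not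
divisible by `s` to the multiple `λ_γ - ρ_m` of `s`. All later parts are multiples of `s` below
it, so only rows `γ - 1` and `γ` change. Row `γ` keeps its count, and row `γ - 1` gains one cell
exactly when `λ_{γ-1} - λ_γ` borrows modulo `s`, i.e. when `γ > 1` and `λ_{γ-1} mod s < ρ_m`.
Read off the sequences, `λ_{γ-1} mod s` is `ρ_{m-1}` if `γ_{m-1} = γ - 1` and `0` otherwise, so
this is the negation of the stated condition.
-/

/-- A partition: a weakly decreasing list of positive integers. -/
def IsPartition (l : List ℕ) : Prop :=
  l.Pairwise (· ≥ ·) ∧ ∀ x ∈ l, 0 < x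

/-- `r_s(λ)`: the number of parts of `λ` divisible by `s`. -/
def partRs (s : ℕ) (l : List ℕ) : ℕ := l.countP (fun x => decide (x % s = 0))

/-- `c_s(λ)`: the number of cells `(i, j)` of the Ferrers diagram of `λ`
with leg length zero and arm length plus one divisible by `s`. -/
def partCs (s : ℕ) (l : List ℕ) : ℕ :=
  ∑ i ∈ Finset.range l.length,
    ((Finset.Icc 1 (l.getD i 0)).filter
      (fun j => l.getD (i + 1) 0 < j ∧ (l.getD i 0 - j + 1) % s = 0)).card

/-- `rem_s(λ)`: the sequence of non-zero remainders of the parts of `λ`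
upon division by `s`, in the order of the parts. -/
def partRem (s : ℕ) (l : List ℕ) : List ℕ :=
  (l.map (fun x => x % s)).filter (fun x => decide (x ≠ 0))

/-- `pos_s(λ)`: the increasing sequence of (1-indexed) positions of the parts
of `λ` not divisible by `s`. -/
def posSeq (s : ℕ) (l : List ℕ) : List ℕ :=
  ((List.range l.length).filter (fun i => decide (l.getD i 0 % s ≠ 0))).map (· + 1)

/-- `Δ_s λ`: replace the part `λ_{γ_m}` (the last part not divisible by `s`)
by `λ_{γ_m} - ρ_m`, deleting it if it becomes zero. -/
def deltaS (s : ℕ) (l : List ℕ) : List ℕ :=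
  let i := ((List.range l.length).filter (fun i => decide (l.getD i 0 % s ≠ 0))).getLastD 0
  (l.set i (l.getD i 0 - l.getD i 0 % s)).filter (fun x => decide (x ≠ 0))

/-- With `rem = (ρ_1, …, ρ_m)` and `pos = (γ_1, …, γ_m)`: `m = 1 ∧ γ_1 = 1`, or
`m > 1 ∧ γ_{m-1} = γ_m - 1 ∧ ρ_m ≤ ρ_{m-1}`. -/
def KeepsCs (rem pos : List ℕ) : Prop :=
  (rem.length = 1 ∧ pos.getD 0 0 = 1) ∨
    (1 < rem.length ∧ pos.getD (rem.length - 2) 0 = pos.getD (rem.length - 1) 0 - 1 ∧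
      rem.getD (rem.length - 1) 0 ≤ rem.getD (rem.length - 2) 0)

theorem Nat.add_mod_div (x b s : ℕ) :
    (x + b % s) / s = x / s + if (x + b) % s < b % s then 1 else 0 := by
  rcases Nat.eq_zero_or_pos s with rfl | hs
  · simp
  have hx := Nat.mod_lt x hs
  have hb := Nat.mod_lt b hs
  rw [Nat.add_div hs, Nat.mod_mod, Nat.div_eq_of_lt hb, Nat.add_mod_eq_ite]
  split_ifs <;> omega

theorem Nat.le_sub_mod_of_mod_eq_zero {a b s : ℕ} (hb : b % s = 0) (hba : b ≤ a) :
    b ≤ a - a % s := by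
  have ha := Nat.mod_add_div a s
  have hb' := Nat.mod_add_div b s
  have := Nat.mul_le_mul_left s (Nat.div_le_div_right (c := s) hba)
  omega

theorem card_filter_Icc_lt_and_sub_add_one_mod (s a b : ℕ) :
    ((Finset.Icc 1 b).filter (fun j => a < j ∧ (b - j + 1) % s = 0)).card = (b - a) / s := by
  rw [← Nat.Ioc_filter_dvd_card_eq_div (b - a) s]
  refine Finset.card_bij' (fun j _ => b + 1 - j) (fun t _ => b + 1 - t) ?_ ?_ ?_ ?_ <;>
    simp only [Finset.mem_filter, Finset.mem_Icc, Finset.mem_Ioc, Nat.dvd_iff_mod_eq_zero]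
  · rintro j ⟨⟨-, hjb⟩, haj, hmod⟩
    exact ⟨by omega, by rwa [show b + 1 - j = b - j + 1 by omega]⟩
  · rintro t ⟨ht, hmod⟩
    exact ⟨by omega, by omega, by rwa [show b - (b + 1 - t) + 1 = t by omega]⟩
  · intro j hj; omega
  · intro t ht; omega

theorem partCs_eq_sum_range (s : ℕ) {l : List ℕ} {N : ℕ} (hN : l.length ≤ N) :
    partCs s l = ∑ i ∈ Finset.range N, (l.getD i 0 - l.getD (i + 1) 0) / s := by
  simp only [partCs, card_filter_Icc_lt_and_sub_add_one_mod]
  refine Finset.sum_subset (Finset.range_subset_range.2 hN) fun i _ hi => ?_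
  rw [List.getD_eq_default _ _ (by simpa using hi), Nat.zero_sub, Nat.zero_div]

theorem List.pairwise_ge_iff_antitone_getD {l : List ℕ} :
    l.Pairwise (· ≥ ·) ↔ Antitone (fun i => l.getD i 0) := by
  refine ⟨fun hl i j hij => ?_, fun hl => List.pairwise_iff_getElem.2 fun i j hi hj hij => ?_⟩
  · rcases lt_or_ge j l.length with hj | hj
    · rcases hij.eq_or_lt with rfl | hij
      · rfl
      · simpa [List.getD_eq_getElem, hj, hij.trans hj] using
          List.pairwise_iff_getElem.1 hl i j (hij.trans hj) hj hij
    · show l.getD j 0 ≤ l.getD i 0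
      rw [List.getD_eq_default _ _ hj]
      exact Nat.zero_le _
  · simpa [List.getD_eq_getElem, hi, hj] using hl hij.le

theorem List.getD_filter_ne_zero {l : List ℕ} (hl : l.Pairwise (· ≥ ·)) (i : ℕ) :
    (l.filter (fun x => decide (x ≠ 0))).getD i 0 = l.getD i 0 := by
  induction l generalizing i with
  | nil => rfl
  | cons a t ih =>
    rw [List.pairwise_cons] at hl
    by_cases ha : a = 0
    · have ht : ∀ x ∈ t, x = 0 := fun x hx => by have := hl.1 x hx; omega
      rw [List.filter_eq_nil_iff.2 (by simpa [ha] using ht)]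
      have hrep : a :: t = List.replicate (t.length + 1) 0 :=
        List.eq_replicate_iff.2 ⟨rfl, by simpa [ha] using ht⟩
      rw [hrep]
      simp
    · rw [List.filter_cons_of_pos (by simpa using ha)]
      cases i with
      | zero => rfl
      | succ i => simpa using ih hl.2 i

theorem List.getD_set_eq_update {l : List ℕ} {i : ℕ} (v : ℕ) (hi : i < l.length) :
    (fun j => (l.set i v).getD j 0) = Function.update (fun j => l.getD j 0) i v := by
  funext j
  rcases eq_or_ne j i with rfl | hj
  · simp [hi]
  · simp [hj, hj.symm]

theorem List.filter_range_eq_append_singleton {p : ℕ → Bool} {n : ℕ}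
    (h : (List.range n).filter p ≠ []) :
    ∃ i < n, p i ∧ (∀ j, i < j → j < n → p j = false) ∧
      (List.range n).filter p = (List.range i).filter p ++ [i] := by
  induction n with
  | zero => simp at h
  | succ n ih =>
    rw [List.range_succ, List.filter_append] at h ⊢
    by_cases hn : p n
    · exact ⟨n, n.lt_succ_self, hn, fun j h1 h2 => by omega, by simp [hn]⟩
    · simp only [List.filter_cons, hn, List.filter_nil, List.append_nil, Bool.false_eq_true,
        if_false] at h ⊢
      obtain ⟨i, hi, hpi, hgt, heq⟩ := ih h
      refine ⟨i, by omega, hpi, fun j h1 h2 => ?_, heq⟩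
      rcases Nat.lt_succ_iff_lt_or_eq.1 h2 with h2 | rfl
      · exact hgt j h1 h2
      · exact Bool.eq_false_iff.2 hn

theorem keepsCs_map_iff (r : ℕ → ℕ) {i : ℕ} (hi : r i ≠ 0) :
    KeepsCs (((List.range i).filter (fun j => decide (r j ≠ 0)) ++ [i]).map r)
        (((List.range i).filter (fun j => decide (r j ≠ 0)) ++ [i]).map (· + 1)) ↔
      i = 0 ∨ r i ≤ r (i - 1) := by
  set K := (List.range i).filter (fun j => decide (r j ≠ 0)) with hK
  have hmemK : ∀ j, j ∈ K ↔ j < i ∧ r j ≠ 0 := by simp [hK]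
  rcases K.eq_nil_or_concat' with hnil | ⟨K', k, hk⟩
  · have hpred : 0 < i → r (i - 1) = 0 := fun hi0 => by
      by_contra h
      simpa [hnil] using (hmemK (i - 1)).2 ⟨by omega, h⟩
    suffices r i ≤ r (i - 1) → i = 0 by simpa [KeepsCs, hnil]
    intro hle
    by_contra hi0
    have := hpred (by omega)
    omega
  · obtain ⟨hki, -⟩ := (hmemK k).1 (by simp [hk])
    have hlast : r (i - 1) ≠ 0 → k = i - 1 := fun hr => by
      obtain ⟨j, rfl⟩ : ∃ j, i = j + 1 := ⟨i - 1, by omega⟩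
      have hKj : K = (List.range j).filter (fun j => decide (r j ≠ 0)) ++ [j] := by
        rw [hK, List.range_succ, List.filter_append]
        simpa using hr
      simpa using congrArg List.getLast? (hk.symm.trans hKj)
    suffices k + 1 = i ∧ r i ≤ r k ↔ i = 0 ∨ r i ≤ r (i - 1) by simpa [KeepsCs, hk]
    constructor
    · rintro ⟨rfl, hle⟩
      exact Or.inr hle
    · rintro (h0 | hle)
      · omega
      · by_cases hr : r (i - 1) = 0
        · omega
        · obtain rfl := hlast hr
          exact ⟨by omega, hle⟩

theorem Antitone.update_sub_mod {f : ℕ → ℕ} (hf : Antitone f) {i s : ℕ}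
    (hmul : ∀ j, i < j → f j % s = 0) : Antitone (Function.update f i (f i - f i % s)) := by
  intro j k hjk
  simp only [Function.update_apply]
  have hfjk := hf hjk
  split_ifs with hk hj hj
  · omega
  · have := hf (hjk.trans_eq hk)
    omega
  · exact Nat.le_sub_mod_of_mod_eq_zero (hmul k (by omega)) (hf (hj ▸ hjk))
  · exact hfjk

theorem sub_succ_div_update_sub_mod {f : ℕ → ℕ} (hf : Antitone f) {i s : ℕ}
    (hmul : ∀ j, i < j → f j % s = 0) (j : ℕ) :
    (Function.update f i (f i - f i % s) j - Function.update f i (f i - f i % s) (j + 1)) / s =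
      (f j - f (j + 1)) / s + if j + 1 = i ∧ f j % s < f i % s then 1 else 0 := by
  have hmod := Nat.mod_le (f i) s
  rcases lt_trichotomy (j + 1) i with hlt | rfl | hgt
  · simp [hlt.ne, show j ≠ i by omega]
  · have hcarry := Nat.add_mod_div (f j - f (j + 1)) (f (j + 1)) s
    rw [Nat.sub_add_cancel (hf (Nat.le_add_right j 1))] at hcarry
    have hfj := hf (Nat.le_add_right j 1)
    simp only [Function.update_apply, show j ≠ j + 1 by omega, if_true, if_false, true_and]
    rwa [show f j - (f (j + 1) - f (j + 1) % s) = f j - f (j + 1) + f (j + 1) % s by omega]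
  rcases (Nat.lt_succ_iff.1 hgt).eq_or_lt with rfl | hij
  · have hnext :=
      Nat.le_sub_mod_of_mod_eq_zero (hmul (i + 1) i.lt_succ_self) (hf (Nat.le_add_right i 1))
    have hdvd : s ∣ f i - f i % s - f (i + 1) :=
      Nat.dvd_sub (Nat.dvd_sub_mod _) (Nat.dvd_of_mod_eq_zero (hmul (i + 1) i.lt_succ_self))
    have hcarry := Nat.add_mod_div (f i - f i % s - f (i + 1)) (f i) s
    obtain ⟨c, hc⟩ := hdvd
    rw [hc, Nat.mul_add_mod_self_left, ← hc, if_neg (lt_irrefl _), add_zero,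
      show f i - f i % s - f (i + 1) + f i % s = f i - f (i + 1) by omega] at hcarry
    simp [hcarry]
  · simp [hij.ne', show j + 1 ≠ i by omega]

theorem sum_sub_succ_div_update_sub_mod {f : ℕ → ℕ} (hf : Antitone f) {i s n : ℕ}
    (hmul : ∀ j, i < j → f j % s = 0) (hi : i < n) :
    ∑ j ∈ Finset.range n,
        (Function.update f i (f i - f i % s) j - Function.update f i (f i - f i % s) (j + 1)) / s =
      ∑ j ∈ Finset.range n, (f j - f (j + 1)) / s +
        if 0 < i ∧ f (i - 1) % s < f i % s then 1 else 0 := by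
  rw [Finset.sum_congr rfl fun j _ => sub_succ_div_update_sub_mod hf hmul j,
    Finset.sum_add_distrib]
  congr 1
  rcases i with _ | k
  · simp
  · simp only [ite_and, Nat.add_right_cancel_iff, Finset.sum_ite_eq', Finset.mem_range]
    simp [show k < n by omega]

theorem partCs_filter_set_sub_mod {s : ℕ} {l : List ℕ} {i : ℕ} (hl : l.Pairwise (· ≥ ·))
    (hi : i < l.length) (hmul : ∀ j, i < j → l.getD j 0 % s = 0) :
    partCs s ((l.set i (l.getD i 0 - l.getD i 0 % s)).filter (fun x => decide (x ≠ 0))) =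
      partCs s l + if 0 < i ∧ l.getD (i - 1) 0 % s < l.getD i 0 % s then 1 else 0 := by
  have hf : Antitone (fun j => l.getD j 0) := List.pairwise_ge_iff_antitone_getD.1 hl
  have hset := List.getD_set_eq_update (l.getD i 0 - l.getD i 0 % s) hi
  have hsorted : (l.set i (l.getD i 0 - l.getD i 0 % s)).Pairwise (· ≥ ·) :=
    List.pairwise_ge_iff_antitone_getD.2 (hset ▸ hf.update_sub_mod hmul)
  rw [partCs_eq_sum_range s ((List.length_filter_le _ _).trans (List.length_set ..).le),
    partCs_eq_sum_range s le_rfl]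
  simp only [List.getD_filter_ne_zero hsorted, congrFun hset]
  exact sum_sub_succ_div_update_sub_mod hf hmul hi

theorem stmt6_general (s : ℕ) (l : List ℕ) (hl : IsPartition l)
    (hne : partRem s l ≠ []) :
    partCs s (deltaS s l) =
      if ((partRem s l).length = 1 ∧ (posSeq s l).getD 0 0 = 1) ∨
          (1 < (partRem s l).length ∧
            (posSeq s l).getD ((partRem s l).length - 2) 0 =
              (posSeq s l).getD ((partRem s l).length - 1) 0 - 1 ∧
            (partRem s l).getD ((partRem s l).length - 1) 0 ≤
              (partRem s l).getD ((partRem s l).length - 2) 0)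
      then partCs s l
      else partCs s l + 1 := by
  set r : ℕ → ℕ := fun j => l.getD j 0 % s
  have hrem : partRem s l = ((List.range l.length).filter (fun j => decide (r j ≠ 0))).map r := by
    have hmap : l.map (· % s) = (List.range l.length).map r :=
      List.ext_getElem (by simp) fun k hk _ => by rw [List.length_map] at hk; simp [r, hk]
    rw [partRem, hmap, List.filter_map]
    rfl
  obtain ⟨i, hi, hri, hafter, hL⟩ :=
    List.filter_range_eq_append_singleton (fun h => hne (by rw [hrem, h, List.map_nil]))
  have hmul : ∀ j, i < j → l.getD j 0 % s = 0 := fun j hij => by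
    rcases lt_or_ge j l.length with hj | hj
    · exact not_not.1 (of_decide_eq_false (hafter j hij hj))
    · rw [List.getD_eq_default _ _ hj, Nat.zero_mod]
  have hdelta : deltaS s l =
      (l.set i (l.getD i 0 - l.getD i 0 % s)).filter (fun x => decide (x ≠ 0)) := by
    rw [deltaS, hL, List.getLastD_concat]
  have hkeep : KeepsCs (partRem s l) (posSeq s l) ↔
      i = 0 ∨ l.getD i 0 % s ≤ l.getD (i - 1) 0 % s := by
    rw [hrem, posSeq, hL]
    exact keepsCs_map_iff r (of_decide_eq_true hri)
  rw [hdelta, partCs_filter_set_sub_mod hl.1 hi hmul]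
  split_ifs with hgrow hkc hkc
  · exact absurd (hkeep.1 hkc) (by omega)
  · rfl
  · rfl
  · exact absurd (hkeep.2 (by omega)) hkc

theorem stmt6 (s : ℕ) (hs : 0 < s) (l : List ℕ) (hl : IsPartition l)
    (hne : partRem s l ≠ []) :
    partCs s (deltaS s l) =
      if ((partRem s l).length = 1 ∧ (posSeq s l).getD 0 0 = 1) ∨
          (1 < (partRem s l).length ∧
            (posSeq s l).getD ((partRem s l).length - 2) 0 =
              (posSeq s l).getD ((partRem s l).length - 1) 0 - 1 ∧
            (partRem s l).getD ((partRem s l).length - 1) 0 ≤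
              (partRem s l).getD ((partRem s l).length - 2) 0)
      then partCs s l
      else partCs s l + 1 :=
  stmt6_general s l hl hne
end

section
/- Let s be a positive integer and let λ be a partition whose remainder sequence rem_s(λ) = (ρ_1, …, ρ_m) modulo s is strictly increasing, with row position sequence pos_s(λ) = (γ_1, …, γ_m). Then for each 1 ≤ j ≤ m, the cell (γ_j, ⌊λ_{γ_j}/s⌋ + 1) is an outer corner of the s-reduction λ↓s = (⌊λ_1/s⌋, …, ⌊λ_ℓ/s⌋); that is, either γ_j = 1 or ⌊λ_{γ_j − 1}/s⌋ ≥ ⌊λ_{γ_j}/s⌋ + 1. Moreover these m cells lie in pairwise distinct columns, i.e., the values ⌊λ_{γ_j}/s⌋ + 1 for j = 1, …, m are pairwise distinct. -/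
/-! Down the rows the parts weakly decrease while the non-zero remainders modulo `s` strictly
increase. So if row `j` lies below row `i` and `λ_j` is not divisible by `s`, then `λ_j ≤ λ_i`
with `λ_j mod s > λ_i mod s`, which forces `⌊λ_j/s⌋ < ⌊λ_i/s⌋`. For consecutive rows this is
the outer-corner condition; for two rows of `pos_s(λ)` it separates the columns. -/

theorem Nat.div_lt_div_of_le_of_mod_lt {s a b : ℕ} (hab : b ≤ a) (hmod : a % s < b % s) :
    b / s < a / s := by
  by_contra! h
  have := Nat.mul_le_mul_left s h
  have := Nat.div_add_mod a s
  have := Nat.div_add_mod b s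
  omega

theorem IsPartition.getElem_le_of_le {l : List ℕ} (hl : IsPartition l) {i j : ℕ} (hij : i ≤ j)
    (hj : j < l.length) : l[j] ≤ l[i] := by
  rcases hij.eq_or_lt with rfl | hij
  · exact le_rfl
  · exact List.pairwise_iff_getElem.mp hl.1 i j (hij.trans hj) hj hij

theorem mod_lt_mod_of_partRem_pairwise {s : ℕ} {l : List ℕ}
    (hinc : (partRem s l).Pairwise (· < ·)) {i j : ℕ} (hij : i < j) (hj : j < l.length)
    (hi0 : l[i] % s ≠ 0) (hj0 : l[j] % s ≠ 0) : l[i] % s < l[j] % s := by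
  rw [partRem, List.pairwise_filter, List.pairwise_map, List.pairwise_iff_getElem] at hinc
  exact hinc i j (hij.trans hj) hj hij (by simpa using hi0) (by simpa using hj0)

theorem IsPartition.div_lt_div_of_lt {s : ℕ} {l : List ℕ} (hl : IsPartition l)
    (hinc : (partRem s l).Pairwise (· < ·)) {i j : ℕ} (hij : i < j) (hj : j < l.length)
    (hj0 : l[j] % s ≠ 0) : l[j] / s < l[i] / s := by
  apply Nat.div_lt_div_of_le_of_mod_lt (hl.getElem_le_of_le hij.le hj)
  by_cases hi0 : l[i] % s = 0
  · omega
  · exact mod_lt_mod_of_partRem_pairwise hinc hij hj hi0 hj0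

theorem mem_posSeq {s g : ℕ} {l : List ℕ} :
    g ∈ posSeq s l ↔ ∃ (i : ℕ) (hi : i < l.length), l[i] % s ≠ 0 ∧ g = i + 1 := by
  simp only [posSeq, List.mem_map, List.mem_filter, List.mem_range, decide_eq_true_eq]
  constructor
  · rintro ⟨i, ⟨hi, hi0⟩, rfl⟩
    exact ⟨i, hi, by rwa [List.getD_eq_getElem l 0 hi] at hi0, rfl⟩
  · rintro ⟨i, hi, hi0, rfl⟩
    exact ⟨i, ⟨hi, by rwa [List.getD_eq_getElem l 0 hi]⟩, rfl⟩

theorem nodup_posSeq (s : ℕ) (l : List ℕ) : (posSeq s l).Nodup :=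
  ((List.nodup_range).filter _).map (fun _ _ => Nat.succ.inj)

theorem stmt7_general (s : ℕ) (l : List ℕ) (hl : IsPartition l)
    (hinc : (partRem s l).Pairwise (· < ·)) :
    -- each cell (γ_j, ⌊λ_{γ_j}/s⌋ + 1) is an outer corner of the s-reduction
    (∀ g ∈ posSeq s l, g = 1 ∨ l.getD (g - 1) 0 / s + 1 ≤ l.getD (g - 2) 0 / s) ∧
    -- and these cells lie in pairwise distinct columns
    ((posSeq s l).map (fun g => l.getD (g - 1) 0 / s + 1)).Nodup := by
  constructor
  · intro g hg
    obtain ⟨i, hi, hi0, rfl⟩ := mem_posSeq.mp hg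
    rcases i with _ | i
    · exact Or.inl rfl
    · right
      rw [Nat.add_sub_cancel, Nat.add_sub_add_right, Nat.add_sub_cancel, List.getD_eq_getElem l 0 hi,
        List.getD_eq_getElem l 0 (i.lt_succ_self.trans hi)]
      exact hl.div_lt_div_of_lt hinc i.lt_succ_self hi hi0
  · refine (nodup_posSeq s l).map_on fun g hg g' hg' hcol => ?_
    obtain ⟨i, hi, hi0, rfl⟩ := mem_posSeq.mp hg
    obtain ⟨j, hj, hj0, rfl⟩ := mem_posSeq.mp hg'
    simp only [Nat.add_sub_cancel, List.getD_eq_getElem l 0 hi, List.getD_eq_getElem l 0 hj,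
      Nat.add_right_cancel_iff] at hcol
    rcases lt_trichotomy i j with hij | rfl | hji
    · exact absurd hcol (hl.div_lt_div_of_lt hinc hij hj hj0).ne'
    · rfl
    · exact absurd hcol (hl.div_lt_div_of_lt hinc hji hi hi0).ne

theorem stmt7 (s : ℕ) (hs : 0 < s) (l : List ℕ) (hl : IsPartition l)
    (hinc : (partRem s l).Pairwise (· < ·)) :
    -- each cell (γ_j, ⌊λ_{γ_j}/s⌋ + 1) is an outer corner of the s-reduction
    (∀ g ∈ posSeq s l, g = 1 ∨ l.getD (g - 1) 0 / s + 1 ≤ l.getD (g - 2) 0 / s) ∧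
    -- and these cells lie in pairwise distinct columns
    ((posSeq s l).map (fun g => l.getD (g - 1) 0 / s + 1)).Nodup :=
  stmt7_general s l hl hinc
end

section
/- Let s be a positive integer and let λ be a non-empty partition whose remainder sequence rem_s(λ) modulo s is strictly increasing of length m. Then r_s(λ) = ℓ(λ) − m and c_s(λ) = ⌈λ_1/s⌉ − m (here ⌈λ_1/s⌉ is the number of columns of the remainder diagram of λ). -/
/-!
Row `i` of the diagram contributes exactly the cells in columns `λ_{i+1} < j ≤ λ_i`, whose values
`λ_i - j + 1` run through `1, …, λ_i - λ_{i+1}`; so it contributes `⌊(λ_i - λ_{i+1}) / s⌋` cells to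
`c_s(λ)`. When the remainders increase, `⌊(a - b) / s⌋ + ⌈b / s⌉ = ⌊a / s⌋` for consecutive parts
`a ≥ b`, so adding the number of non-zero remainders makes the row counts telescope to `⌈λ_1 / s⌉`.
The formula for `r_s(λ)` only says that every part is either divisible by `s` or not.
-/

open Finset

namespace Nat

theorem add_pred_div_eq {s : ℕ} (hs : 0 < s) (b : ℕ) :
    (b + s - 1) / s = b / s + if b % s = 0 then 0 else 1 := by
  have hpred : (s - 1) % s = s - 1 := Nat.mod_eq_of_lt (by omega)
  rw [Nat.add_sub_assoc hs, Nat.add_div hs, Nat.div_eq_of_lt (by omega : s - 1 < s), hpred]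
  split_ifs <;> omega

theorem sub_div_add_add_pred_div {s a b : ℕ} (hs : 0 < s) (hba : b ≤ a)
    (hmod : b % s = 0 ∨ a % s < b % s) : (a - b) / s + (b + s - 1) / s = a / s := by
  obtain ⟨x, rfl⟩ := Nat.exists_eq_add_of_le hba
  have hwrap := Nat.add_mod_add_ite b x s
  have := Nat.mod_lt x hs
  rw [Nat.add_sub_cancel_left, add_pred_div_eq hs, Nat.add_div hs]
  split_ifs at hwrap ⊢ <;> omega

theorem card_filter_lt_sub_add_one_mod_eq_zero (s a b : ℕ) (hba : b ≤ a) :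
    #{j ∈ Icc 1 a | b < j ∧ (a - j + 1) % s = 0} = (a - b) / s := by
  rw [← Nat.Ioc_filter_dvd_card_eq_div]
  apply Finset.card_nbij' (fun j => a + 1 - j) (fun k => a + 1 - k)
  all_goals
    intro j hj
    simp only [Finset.coe_filter, Finset.mem_Icc, Finset.mem_Ioc, Set.mem_ofPred_eq,
      ← Nat.dvd_iff_mod_eq_zero] at hj ⊢
  · refine ⟨by omega, ?_⟩
    rw [show a + 1 - j = a - j + 1 by omega]
    exact hj.2.2
  · refine ⟨by omega, by omega, ?_⟩
    rw [show a - (a + 1 - j) + 1 = j by omega]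
    exact hj.2
  · omega
  · omega

end Nat

theorem partRs_add_length_partRem (s : ℕ) (l : List ℕ) :
    partRs s l + (partRem s l).length = l.length := by
  rw [partRs, partRem, ← List.countP_eq_length_filter, List.countP_map,
    List.length_eq_countP_add_countP (fun x => decide (x % s = 0))]
  congr 1
  exact List.countP_congr (by simp)

theorem partRem_cons (s a : ℕ) (t : List ℕ) :
    partRem s (a :: t) = if a % s = 0 then partRem s t else a % s :: partRem s t := by
  by_cases h : a % s = 0 <;> simp [partRem, h]

theorem partCs_cons (s a : ℕ) (t : List ℕ) :
    partCs s (a :: t) = #{j ∈ Icc 1 a | t.headD 0 < j ∧ (a - j + 1) % s = 0} + partCs s t := by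
  unfold partCs
  rw [List.length_cons, Finset.sum_range_succ', add_comm]
  simp only [List.getD_cons_succ, List.getD_cons_zero]
  congr 2
  cases t <;> simp

theorem mod_lt_mod_of_pairwise_partRem {s a b : ℕ} {t : List ℕ}
    (hinc : (partRem s (a :: b :: t)).Pairwise (· < ·)) (hb : b % s ≠ 0) : a % s < b % s := by
  rw [partRem_cons, partRem_cons, if_neg hb] at hinc
  split_ifs at hinc with ha
  · omega
  · exact List.rel_of_pairwise_cons hinc List.mem_cons_self

theorem partCs_add_length_partRem {s : ℕ} (hs : 0 < s) {l : List ℕ} (hl : l.Pairwise (· ≥ ·))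
    (hinc : (partRem s l).Pairwise (· < ·)) :
    partCs s l + (partRem s l).length = (l.headD 0 + s - 1) / s := by
  induction l with
  | nil =>
    simp only [partCs, partRem, List.length_nil, Finset.range_zero, Finset.sum_empty,
      List.map_nil, List.filter_nil, List.headD_nil, zero_add]
    exact (Nat.div_eq_of_lt (by omega)).symm
  | cons a t ih =>
    rw [List.pairwise_cons] at hl
    have hinc_t : (partRem s t).Pairwise (· < ·) :=
      hinc.sublist (((List.sublist_cons_self a t).map _).filter _)
    have hhead : t.headD 0 ≤ a := by
      cases t with
      | nil => simp
      | cons b t => exact hl.1 b List.mem_cons_self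
    have hmod : t.headD 0 % s = 0 ∨ a % s < t.headD 0 % s := by
      cases t with
      | nil => simp
      | cons b t => exact (em (b % s = 0)).imp id (mod_lt_mod_of_pairwise_partRem hinc)
    rw [partCs_cons, Nat.card_filter_lt_sub_add_one_mod_eq_zero s a _ hhead, partRem_cons,
      List.headD_cons, Nat.add_pred_div_eq hs a, ← Nat.sub_div_add_add_pred_div hs hhead hmod,
      ← ih hl.2 hinc_t]
    split_ifs <;> simp only [List.length_cons, add_zero] <;> omega

theorem stmt8_general (s : ℕ) (hs : 0 < s) (l : List ℕ) (hl : IsPartition l)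
    (hinc : (partRem s l).Pairwise (· < ·)) :
    partRs s l = l.length - (partRem s l).length ∧
    partCs s l = (l.headD 0 + s - 1) / s - (partRem s l).length := by
  have hr := partRs_add_length_partRem s l
  have hc := partCs_add_length_partRem hs hl.1 hinc
  constructor <;> omega

theorem stmt8 (s : ℕ) (hs : 0 < s) (l : List ℕ) (hl : IsPartition l)
    (hne : l ≠ []) (hinc : (partRem s l).Pairwise (· < ·)) :
    partRs s l = l.length - (partRem s l).length ∧
    partCs s l = (l.headD 0 + s - 1) / s - (partRem s l).length :=
  stmt8_general s hs l hl hinc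
end

section
/- Let ρ = (ρ_1, …, ρ_m) be a sequence of positive integers of length m ≥ 1, and let G ≥ m be a fixed positive integer. Then, as polynomials in Q, Q^{wmaj(ρ)} · ∑ Q^{∑_{j=1}^m d_j (γ_j − 1)} = ∑ Q^{(γ_1 − 1) + … + (γ_m − 1)}, where both sums range over all strictly increasing sequences 1 ≤ γ_1 < γ_2 < … < γ_m with γ_m = G, and (d_1, …, d_m) = d(ρ, γ). -/
open Polynomial

/-- The weak major index: the sum of positions `j` (1-indexed) with `ρ_j ≥ ρ_{j+1}`. -/
def wmaj (ρ : List ℕ) : ℕ :=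
  ∑ i ∈ Finset.range (ρ.length - 1),
    if ρ.getD (i + 1) 0 ≤ ρ.getD i 0 then i + 1 else 0

/-- `d(ρ, γ)_j` for the 0-indexed position `j` (corresponding to the 1-indexed
position `j + 1`): it is `0` if `j ≥ 1`, `ρ_j ≥ ρ_{j+1}` and `γ_{j+1} = γ_j + 1`
(1-indexed), and `1` otherwise. -/
def dseq (ρ γ : List ℕ) (j : ℕ) : ℕ :=
  if 0 < j ∧ ρ.getD j 0 ≤ ρ.getD (j - 1) 0 ∧ γ.getD j 0 = γ.getD (j - 1) 0 + 1
  then 0 else 1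

/-! Let `D` be the set of positions `p` with `ρ_{p-1} ≥ ρ_p`, so that `wmaj ρ = ∑_{p ∈ D} (p - 1)`,
and for any set `D` of positions write `w_D(γ) = ∑_j d_j (γ_j - 1)`, where `d_j = 0` iff `j ∈ D` and
`γ_j = γ_{j-1} + 1`. We add the elements of `D` one at a time, smallest first. If `p` lies below
every element of `D`, rotating the entries `γ_1, …, γ_{p-1}` cyclically inside `{1, …, γ_p - 1}`
(`x ↦ x + 1`, and `γ_p - 1 ↦ 1`) is a bijection of the set of sequences with
`w_D(rot γ) = (p - 1) + w_{D ∪ {p}}(γ)`: each of the `p - 1` entries grows by one, except at a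
plateau `γ_{p-1} = γ_p - 1`, where the wrap-around loses exactly the `γ_p - 1` that `d_p = 0`
removes. -/

namespace WeakMajor

open Finset

/-- Positions are `0`-indexed, and the sequence is extended by zeros so that sequences can be
compared as functions. -/
structure IsIncSeq (m G : ℕ) (γ : ℕ → ℕ) : Prop where
  pos : 0 < γ 0
  lt_succ : ∀ k, k + 1 < m → γ k < γ (k + 1)
  last : γ (m - 1) = G
  eq_zero : ∀ k, m ≤ k → γ k = 0

namespace IsIncSeq

variable {m G : ℕ} {γ : ℕ → ℕ}

lemma lt (h : IsIncSeq m G γ) {k l : ℕ} (hkl : k < l) (hl : l < m) : γ k < γ l := by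
  induction l, hkl using Nat.le_induction with
  | base => exact h.lt_succ k hl
  | succ l hkl ih => exact (ih (by omega)).trans (h.lt_succ l hl)

lemma pos_of_lt (h : IsIncSeq m G γ) {k : ℕ} (hk : k < m) : 0 < γ k := by
  rcases k.eq_zero_or_pos with rfl | hk0
  · exact h.pos
  · exact h.pos.trans (h.lt hk0 hk)

end IsIncSeq

lemma sum_range_sub_one_add {f : ℕ → ℕ} {n : ℕ} (hf : ∀ k < n, 0 < f k) :
    ∑ k ∈ range n, (f k - 1) + n = ∑ k ∈ range n, f k := by
  induction n with
  | zero => simp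
  | succ n ih =>
    rw [sum_range_succ, sum_range_succ, ← ih fun k hk => hf k (by omega)]
    have := hf n (by omega)
    omega

section Rotate

/-- On positions `0, …, i`, the cyclic shift `x ↦ x + 1` of `{1, …, γ (i + 1) - 1}`. -/
def rotate (i : ℕ) (γ : ℕ → ℕ) (k : ℕ) : ℕ :=
  if i < k then γ k
  else if γ (i + 1) = γ i + 1 then (if k = 0 then 1 else γ (k - 1) + 1)
  else γ k + 1

variable {i k : ℕ} {γ : ℕ → ℕ}

lemma rotate_of_lt (h : i < k) : rotate i γ k = γ k := if_pos h

lemma rotate_zero_of_plateau (hp : γ (i + 1) = γ i + 1) : rotate i γ 0 = 1 := by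
  simp [rotate, hp]

lemma rotate_succ_of_plateau (hp : γ (i + 1) = γ i + 1) (hk : k < i) :
    rotate i γ (k + 1) = γ k + 1 := by
  simp [rotate, hp, Nat.not_lt.mpr hk]

lemma rotate_of_not_plateau (hp : γ (i + 1) ≠ γ i + 1) (hk : k ≤ i) :
    rotate i γ k = γ k + 1 := by
  simp [rotate, hp, Nat.not_lt.mpr hk]

lemma IsIncSeq.rotate {m G : ℕ} (h : IsIncSeq m G γ) (hi : i + 1 < m) :
    IsIncSeq m G (rotate i γ) where
  pos := by
    unfold WeakMajor.rotate
    split_ifs <;> omega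
  lt_succ k hk := by
    have h0 := h.pos
    have hk_succ := h.lt_succ k hk
    have hi_succ := h.lt_succ i hi
    have hk_pred : 0 < k → γ (k - 1) < γ k := fun hk0 => h.lt (by omega) (by omega)
    unfold WeakMajor.rotate
    split_ifs <;> grind
  last := by rw [rotate_of_lt (by omega), h.last]
  eq_zero k hk := by rw [rotate_of_lt (by omega), h.eq_zero k hk]

lemma rotate_zero_eq_one_iff (hγ : 0 < γ 0) : rotate i γ 0 = 1 ↔ γ (i + 1) = γ i + 1 := by
  by_cases hp : γ (i + 1) = γ i + 1
  · simp [rotate_zero_of_plateau hp, hp]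
  · simp only [rotate_of_not_plateau hp (Nat.zero_le i), hp, iff_false]
    omega

lemma rotate_injOn (i : ℕ) : Set.InjOn (rotate i) {γ | 0 < γ 0} := by
  intro γ (hγ : 0 < γ 0) δ (hδ : 0 < δ 0) h
  have htop : γ (i + 1) = δ (i + 1) := by
    simpa only [rotate_of_lt (Nat.lt_succ_self i)] using congrFun h (i + 1)
  funext k
  rcases lt_or_ge i k with hik | hki
  · simpa only [rotate_of_lt hik] using congrFun h k
  by_cases hp : γ (i + 1) = γ i + 1
  · have hq : δ (i + 1) = δ i + 1 := by
      rwa [← rotate_zero_eq_one_iff hδ, ← h, rotate_zero_eq_one_iff hγ]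
    rcases hki.lt_or_eq with hki | rfl
    · have := congrFun h (k + 1)
      rw [rotate_succ_of_plateau hp hki, rotate_succ_of_plateau hq hki] at this
      omega
    · omega
  · have hq : δ (i + 1) ≠ δ i + 1 := by
      rwa [Ne, ← rotate_zero_eq_one_iff hδ, ← h, rotate_zero_eq_one_iff hγ]
    have := congrFun h k
    rw [rotate_of_not_plateau hp hki, rotate_of_not_plateau hq hki] at this
    omega

lemma sum_range_rotate_sub_one (hγ : ∀ k ≤ i, 0 < γ k) :
    ∑ k ∈ range (i + 1), (rotate i γ k - 1) + (γ (i + 1) - 1) =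
      i + 1 + ∑ k ∈ range (i + 1), (γ k - 1) +
        if γ (i + 1) = γ i + 1 then 0 else γ (i + 1) - 1 := by
  rw [add_comm (i + 1), sum_range_sub_one_add fun k hk => hγ k (by omega)]
  by_cases hp : γ (i + 1) = γ i + 1
  · rw [if_pos hp, sum_range_succ', rotate_zero_of_plateau hp, sum_range_succ,
      sum_congr rfl fun k hk => by rw [rotate_succ_of_plateau hp (mem_range.mp hk)]]
    simp [hp]
  · rw [if_neg hp, sum_congr rfl fun k hk => by
      rw [rotate_of_not_plateau hp (Nat.lt_succ_iff.mp (mem_range.mp hk))]]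
    simp

end Rotate

section Weight

variable {i : ℕ} {γ : ℕ → ℕ}

def dcoeff (D : Finset ℕ) (γ : ℕ → ℕ) (k : ℕ) : ℕ :=
  if k ∈ D ∧ γ k = γ (k - 1) + 1 then 0 else 1

def weight (m : ℕ) (D : Finset ℕ) (γ : ℕ → ℕ) : ℕ :=
  ∑ k ∈ range m, dcoeff D γ k * (γ k - 1)

lemma dcoeff_of_notMem {D : Finset ℕ} {k : ℕ} (h : k ∉ D) : dcoeff D γ k = 1 :=
  if_neg fun hk => h hk.1

lemma weight_empty (m : ℕ) : weight m ∅ γ = ∑ k ∈ range m, (γ k - 1) := by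
  simp [weight, dcoeff_of_notMem]

lemma sum_range_dcoeff_of_le {D : Finset ℕ} {n : ℕ} (hD : ∀ x ∈ D, n ≤ x) :
    ∑ k ∈ range n, dcoeff D γ k * (γ k - 1) = ∑ k ∈ range n, (γ k - 1) :=
  sum_congr rfl fun k hk => by
    rw [dcoeff_of_notMem fun h => by have := hD k h; have := mem_range.mp hk; omega, one_mul]

lemma weight_rotate {m : ℕ} {s : Finset ℕ} (hγ : ∀ k ≤ i, 0 < γ k) (hi : i + 1 < m)
    (hs : ∀ x ∈ s, i + 1 < x) :
    weight m s (rotate i γ) = i + 1 + weight m (insert (i + 1) s) γ := by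
  have hsplit := fun f : ℕ → ℕ => (sum_range_add_sum_Ico f (show i + 1 + 1 ≤ m by omega)).symm
  have htail : ∑ k ∈ Ico (i + 1 + 1) m, dcoeff s (rotate i γ) k * (rotate i γ k - 1) =
      ∑ k ∈ Ico (i + 1 + 1) m, dcoeff (insert (i + 1) s) γ k * (γ k - 1) := by
    refine sum_congr rfl fun k hk => ?_
    have hk := (mem_Ico.mp hk).1
    simp only [dcoeff, rotate_of_lt (show i < k by omega), rotate_of_lt (show i < k - 1 by omega),
      mem_insert, show k ≠ i + 1 by omega, false_or]
  have hmid : dcoeff (insert (i + 1) s) γ (i + 1) * (γ (i + 1) - 1) =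
      if γ (i + 1) = γ i + 1 then 0 else γ (i + 1) - 1 := by
    simp only [dcoeff, mem_insert_self, true_and, Nat.add_sub_cancel]
    split_ifs <;> simp
  rw [weight, weight, hsplit, hsplit, htail, sum_range_dcoeff_of_le hs, sum_range_succ _ (i + 1),
    sum_range_succ _ (i + 1), hmid, sum_range_dcoeff_of_le fun x hx =>
      (mem_insert.mp hx).elim ge_of_eq fun h => (hs x h).le,
    rotate_of_lt (Nat.lt_succ_self i), sum_range_rotate_sub_one hγ]
  ring

end Weight

section IncSeqs

variable {m G : ℕ}

def seqOfFinset (G : ℕ) (T : Finset ℕ) (k : ℕ) : ℕ :=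
  (T.sort (· ≤ ·) ++ [G]).getD k 0

lemma isIncSeq_seqOfFinset (hm : 1 ≤ m) (hG : 1 ≤ G) {T : Finset ℕ}
    (hT : T ∈ (Icc 1 (G - 1)).powersetCard (m - 1)) : IsIncSeq m G (seqOfFinset G T) := by
  obtain ⟨hTsub, hTcard⟩ := mem_powersetCard.mp hT
  have hmem : ∀ x ∈ T.sort (· ≤ ·), 1 ≤ x ∧ x < G := fun x hx => by
    have := mem_Icc.mp (hTsub ((mem_sort _).mp hx))
    omega
  have hsl : (T.sort (· ≤ ·)).length = m - 1 := by rw [length_sort, hTcard]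
  have hlen : (T.sort (· ≤ ·) ++ [G]).length = m := by
    rw [List.length_append, hsl, List.length_singleton]; omega
  have hsorted : (T.sort (· ≤ ·) ++ [G]).Pairwise (· < ·) := List.pairwise_append.mpr
    ⟨(sortedLT_sort T).pairwise, List.pairwise_singleton _ _,
      fun a ha b hb => (List.mem_singleton.mp hb) ▸ (hmem a ha).2⟩
  have hget : ∀ k (hk : k < m), seqOfFinset G T k = (T.sort (· ≤ ·) ++ [G])[k] := fun k hk =>
    List.getD_eq_getElem _ _ (hlen ▸ hk)
  refine ⟨?_, fun k hk => ?_, ?_, fun k hk => List.getD_eq_default _ _ (hlen ▸ hk)⟩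
  · rw [hget 0 (by omega)]
    have h0 : 0 < (T.sort (· ≤ ·) ++ [G]).length := hlen ▸ hm
    rcases List.mem_append.mp (List.getElem_mem h0) with h | h
    · exact (hmem _ h).1
    · rw [List.mem_singleton.mp h]; omega
  · rw [hget k (by omega), hget (k + 1) hk]
    exact List.pairwise_iff_getElem.mp hsorted k (k + 1) _ _ (Nat.lt_succ_self k)
  · rw [seqOfFinset, List.getD_append_right _ _ _ _ (by omega), hsl, Nat.sub_self]
    rfl

lemma IsIncSeq.exists_seqOfFinset_eq {γ : ℕ → ℕ} (hγ : IsIncSeq m G γ) :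
    ∃ T ∈ (Icc 1 (G - 1)).powersetCard (m - 1), seqOfFinset G T = γ := by
  classical
  obtain ⟨l, hl⟩ : ∃ l, l = (List.range (m - 1)).map γ := ⟨_, rfl⟩
  have hlen : l.length = m - 1 := by simp [hl]
  have hget : ∀ k (hk : k < m - 1), l.getD k 0 = γ k := fun k hk => by
    rw [List.getD_eq_getElem _ _ (hlen ▸ hk)]
    simp [hl]
  have hsorted : l.Pairwise (· < ·) := hl ▸ List.pairwise_map.mpr
    (List.pairwise_lt_range.imp_of_mem fun ha hb hab =>
      hγ.lt hab (by have := List.mem_range.mp hb; omega))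
  refine ⟨l.toFinset, mem_powersetCard.mpr ⟨fun x hx => ?_, ?_⟩, ?_⟩
  · obtain ⟨k, hk, rfl⟩ := List.mem_map.mp (hl ▸ List.mem_toFinset.mp hx)
    have hk := List.mem_range.mp hk
    have := hγ.pos_of_lt (show k < m by omega)
    have := hγ.lt (show k < m - 1 by omega) (show m - 1 < m by omega)
    rw [hγ.last] at this
    exact mem_Icc.mpr ⟨by omega, by omega⟩
  · rw [List.toFinset_card_of_nodup hsorted.nodup, hlen]
  · funext k
    rw [seqOfFinset, (List.toFinset_sort (· ≤ ·) hsorted.nodup).mpr (hsorted.imp le_of_lt)]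
    rcases lt_trichotomy k (m - 1) with hk | rfl | hk
    · rw [List.getD_append _ _ _ _ (hlen ▸ hk), hget k hk]
    · rw [List.getD_append_right _ _ _ _ hlen.le, hlen, Nat.sub_self, hγ.last]
      rfl
    · rw [List.getD_eq_default _ _ (by simp [hlen]; omega), hγ.eq_zero k (by omega)]

lemma seqOfFinset_injOn : Set.InjOn (seqOfFinset G) ((Icc 1 (G - 1)).powersetCard (m - 1)) := by
  intro T₁ hT₁ T₂ hT₂ h
  have hlen₁ : (T₁.sort (· ≤ ·)).length = m - 1 := by simp [(mem_powersetCard.mp hT₁).2]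
  have hlen₂ : (T₂.sort (· ≤ ·)).length = m - 1 := by simp [(mem_powersetCard.mp hT₂).2]
  have hl : T₁.sort (· ≤ ·) ++ [G] = T₂.sort (· ≤ ·) ++ [G] :=
    List.ext_getElem (by simp [hlen₁, hlen₂]) fun n h₁ h₂ => by
      simpa only [seqOfFinset, List.getD_eq_getElem _ _ h₁, List.getD_eq_getElem _ _ h₂]
        using congrFun h n
  simpa using congrArg List.toFinset (List.append_cancel_right hl)

open Classical in
noncomputable def incSeqs (m G : ℕ) : Finset (ℕ → ℕ) :=
  ((Icc 1 (G - 1)).powersetCard (m - 1)).image (seqOfFinset G)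

lemma mem_incSeqs (hm : 1 ≤ m) (hG : 1 ≤ G) {γ : ℕ → ℕ} : γ ∈ incSeqs m G ↔ IsIncSeq m G γ := by
  classical
  refine ⟨fun h => ?_, fun h => ?_⟩
  · obtain ⟨T, hT, rfl⟩ := mem_image.mp h
    exact isIncSeq_seqOfFinset hm hG hT
  · obtain ⟨T, hT, rfl⟩ := h.exists_seqOfFinset_eq
    exact mem_image_of_mem _ hT

lemma sum_incSeqs {M : Type*} [AddCommMonoid M] (f : (ℕ → ℕ) → M) :
    ∑ γ ∈ incSeqs m G, f γ = ∑ T ∈ (Icc 1 (G - 1)).powersetCard (m - 1), f (seqOfFinset G T) := by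
  classical
  exact sum_image seqOfFinset_injOn

lemma sum_incSeqs_comp_rotate {M : Type*} [AddCommMonoid M] (hm : 1 ≤ m) (hG : 1 ≤ G) {i : ℕ}
    (hi : i + 1 < m) (f : (ℕ → ℕ) → M) :
    ∑ γ ∈ incSeqs m G, f (rotate i γ) = ∑ γ ∈ incSeqs m G, f γ := by
  classical
  have hinj : Set.InjOn (rotate i) (incSeqs m G) := (rotate_injOn i).mono fun γ hγ =>
    ((mem_incSeqs hm hG).mp hγ).pos
  have himage : (incSeqs m G).image (rotate i) = incSeqs m G :=
    eq_of_subset_of_card_le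
      (image_subset_iff.mpr fun γ hγ =>
        (mem_incSeqs hm hG).mpr (((mem_incSeqs hm hG).mp hγ).rotate hi))
      (card_image_of_injOn hinj).ge
  rw [← sum_image hinj, himage]

theorem sum_incSeqs_add_weight {M : Type*} [AddCommMonoid M] (hm : 1 ≤ m) (hG : 1 ≤ G)
    (f : ℕ → M) {D : Finset ℕ} (hD : D ⊆ Ico 1 m) :
    ∑ γ ∈ incSeqs m G, f (∑ j ∈ D, j + weight m D γ) = ∑ γ ∈ incSeqs m G, f (weight m ∅ γ) := by
  induction D using Finset.induction_on_min with
  | empty => simp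
  | insert a s has ih =>
    have ha := mem_Ico.mp (hD (mem_insert_self a s))
    obtain ⟨i, rfl⟩ : ∃ i, a = i + 1 := ⟨a - 1, by omega⟩
    rw [← ih ((subset_insert _ s).trans hD),
      ← sum_incSeqs_comp_rotate hm hG ha.2 fun γ => f (∑ j ∈ s, j + weight m s γ)]
    refine sum_congr rfl fun γ hγ => ?_
    have hγ := (mem_incSeqs hm hG).mp hγ
    rw [sum_insert fun h => lt_irrefl _ (has _ h),
      weight_rotate (fun k hk => hγ.pos_of_lt (by omega)) ha.2 has, add_assoc, add_left_comm]

end IncSeqs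

def descents (ρ : List ℕ) : Finset ℕ :=
  (Ico 1 ρ.length).filter fun j => ρ.getD j 0 ≤ ρ.getD (j - 1) 0

lemma descents_subset (ρ : List ℕ) : descents ρ ⊆ Ico 1 ρ.length := filter_subset _ _

lemma wmaj_eq_sum_descents (ρ : List ℕ) : wmaj ρ = ∑ j ∈ descents ρ, j := by
  rw [descents, sum_filter, wmaj, sum_Ico_eq_sum_range]
  exact sum_congr rfl fun i _ => by simp [add_comm 1 i]

lemma dseq_eq_dcoeff (ρ γ : List ℕ) {k : ℕ} (hk : k < ρ.length) :
    dseq ρ γ k = dcoeff (descents ρ) (fun j => γ.getD j 0) k := by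
  simp only [dseq, dcoeff, descents, mem_filter, mem_Ico]
  exact if_congr (by omega) rfl rfl

end WeakMajor

theorem stmt12_general (m G : ℕ) (hm : 1 ≤ m) (hG : m ≤ G) (ρ : List ℕ)
    (hρlen : ρ.length = m) :
    (Polynomial.X : Polynomial ℤ) ^ wmaj ρ *
      ∑ T ∈ (Finset.Icc 1 (G - 1)).powersetCard (m - 1),
        (Polynomial.X : Polynomial ℤ) ^
          (∑ j ∈ Finset.range m,
            dseq ρ (T.sort (· ≤ ·) ++ [G]) j * ((T.sort (· ≤ ·) ++ [G]).getD j 0 - 1)) =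
    ∑ T ∈ (Finset.Icc 1 (G - 1)).powersetCard (m - 1),
        (Polynomial.X : Polynomial ℤ) ^
          (∑ j ∈ Finset.range m, ((T.sort (· ≤ ·) ++ [G]).getD j 0 - 1)) := by
  subst hρlen
  have key := WeakMajor.sum_incSeqs_add_weight hm (hm.trans hG) (fun n => (X : ℤ[X]) ^ n)
    (WeakMajor.descents_subset ρ)
  simp only [WeakMajor.sum_incSeqs, WeakMajor.weight_empty, pow_add] at key
  rw [Finset.mul_sum, WeakMajor.wmaj_eq_sum_descents]
  refine Eq.trans (Finset.sum_congr rfl fun T _ => ?_) key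
  rw [WeakMajor.weight]
  congr 2
  exact Finset.sum_congr rfl fun j hj => by
    rw [WeakMajor.dseq_eq_dcoeff _ _ (Finset.mem_range.mp hj)]
    rfl

/-- Strictly increasing sequences `1 ≤ γ_1 < … < γ_m` with `γ_m = G` correspond to
`(m-1)`-element subsets `T` of `{1, …, G-1}`, via `γ = (sorted T) ++ [G]`. -/
theorem stmt12 (m G : ℕ) (hm : 1 ≤ m) (hG : m ≤ G) (ρ : List ℕ)
    (hρlen : ρ.length = m) (hρpos : ∀ x ∈ ρ, 0 < x) :
    (Polynomial.X : Polynomial ℤ) ^ wmaj ρ *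
      ∑ T ∈ (Finset.Icc 1 (G - 1)).powersetCard (m - 1),
        (Polynomial.X : Polynomial ℤ) ^
          (∑ j ∈ Finset.range m,
            dseq ρ (T.sort (· ≤ ·) ++ [G]) j * ((T.sort (· ≤ ·) ++ [G]).getD j 0 - 1)) =
    ∑ T ∈ (Finset.Icc 1 (G - 1)).powersetCard (m - 1),
        (Polynomial.X : Polynomial ℤ) ^
          (∑ j ∈ Finset.range m, ((T.sort (· ≤ ·) ++ [G]).getD j 0 - 1)) :=
  stmt12_general m G hm hG ρ hρlen
end
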